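/- If every state of tree automaton A = (Q, Σ, F, δ) is reachable and F ≠ ∅ and Σ contains at least one symbol of arity 0 (so that ground terms exist), then there exists a ground term t and a final state q ∈ F with t ⇝* q; moreover, if additionally the hypotheses of the weak-closure criterion hold for a left-linear TRS R (for all ℓ → r ∈ R, α : X → Q, q ∈ Q: ℓα ⇝* q implies tα ⇝* q for some t with ℓ →_R⁺ t) and L(A) contains no R-normal forms, then L(A) is infinite or some term of L(A) starts an infinite R-reduction. -/

import Mathlib

/-- Terms over a ranked signature `F` (with arity `ar`) and variables `V`.
States of a tree automaton are treated as extra constants, i.e. variables. -/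
inductive Tm (F : Type) (ar : F → ℕ) (V : Type) : Type
  | var : V → Tm F ar V
  | node : (f : F) → (Fin (ar f) → Tm F ar V) → Tm F ar V

namespace Tm

variable {F : Type} {ar : F → ℕ}

/-- Substitution. -/
def subst {V W : Type} (σ : V → Tm F ar W) : Tm F ar V → Tm F ar W
  | var x => σ x
  | node f ts => node f (fun i => (ts i).subst σ)

/-- The list of variable occurrences of a term. -/
def varsList {V : Type} : Tm F ar V → List V
  | var x => [x]
  | node f ts => (List.ofFn (fun i => (ts i).varsList)).flatten

/-- A term is linear if every variable occurs at most once. -/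
def Linear {V : Type} (t : Tm F ar V) : Prop := t.varsList.Nodup

/-- Subterm relation. -/
inductive Subtm {V : Type} : Tm F ar V → Tm F ar V → Prop
  | refl (t : Tm F ar V) : Subtm t t
  | child {s : Tm F ar V} {f : F} {ts : Fin (ar f) → Tm F ar V} (i : Fin (ar f)) :
      Subtm s (ts i) → Subtm s (node f ts)

end Tm

/-- Ground terms: terms without variables. -/
abbrev GTm (F : Type) (ar : F → ℕ) : Type := Tm F ar Empty

/-- A ground term viewed as a term over any variable type. -/
def GTm.toTm {F : Type} {ar : F → ℕ} {V : Type} (t : GTm F ar) : Tm F ar V :=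
  t.subst (fun e => e.elim)

/-- A (bottom-up, possibly non-deterministic) tree automaton:
final states and a transition relation `δ`. -/
structure Automaton (F : Type) (ar : F → ℕ) (Q : Type) where
  final : Set Q
  delta : (f : F) → (Fin (ar f) → Q) → Q → Prop

namespace Automaton

variable {F : Type} {ar : F → ℕ} {Q Q' : Type}

/-- One rewrite step `⇝` induced by an automaton on terms over `Σ ∪ Q`. -/
inductive Step (A : Automaton F ar Q) : Tm F ar Q → Tm F ar Q → Prop
  | base {f : F} {qs : Fin (ar f) → Q} {q : Q} :
      A.delta f qs q → Step A (.node f (fun i => .var (qs i))) (.var q)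
  | congr {f : F} {ts : Fin (ar f) → Tm F ar Q} {i : Fin (ar f)} {t' : Tm F ar Q} :
      Step A (ts i) t' → Step A (.node f ts) (.node f (Function.update ts i t'))

/-- The reduction relation `⇝*`. -/
def Steps (A : Automaton F ar Q) : Tm F ar Q → Tm F ar Q → Prop :=
  Relation.ReflTransGen (Step A)

/-- A state is reachable if some ground term reduces to it. -/
def Reachable (A : Automaton F ar Q) (q : Q) : Prop :=
  ∃ t : GTm F ar, A.Steps t.toTm (.var q)

/-- The language of the automaton. -/
def Lang (A : Automaton F ar Q) : Set (GTm F ar) :=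
  {t | ∃ q ∈ A.final, A.Steps t.toTm (.var q)}

/-- The product automaton. -/
def prod (A : Automaton F ar Q) (B : Automaton F ar Q') : Automaton F ar (Q × Q') where
  final := A.final ×ˢ B.final
  delta f qs q := A.delta f (fun i => (qs i).1) q.1 ∧ B.delta f (fun i => (qs i).2) q.2

/-- Determinism. -/
def Deterministic (A : Automaton F ar Q) : Prop :=
  ∀ (f : F) (qs : Fin (ar f) → Q) (q q' : Q), A.delta f qs q → A.delta f qs q' → q = q'

/-- Completeness. -/
def Complete (A : Automaton F ar Q) : Prop :=
  ∀ (f : F) (qs : Fin (ar f) → Q), ∃ q : Q, A.delta f qs q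

end Automaton

/-- A term rewriting system: a set of rules over variables `X`. -/
abbrev TRS (F : Type) (ar : F → ℕ) (X : Type) : Type := Set (Tm F ar X × Tm F ar X)

/-- A TRS is left-linear if no variable occurs twice in a left-hand side. -/
def LeftLinear {F : Type} {ar : F → ℕ} {X : Type} (R : TRS F ar X) : Prop :=
  ∀ p ∈ R, p.1.Linear

/-- One rewrite step `→_R` (on terms over any variable type `V`). -/
inductive RStep {F : Type} {ar : F → ℕ} {X V : Type} (R : TRS F ar X) :
    Tm F ar V → Tm F ar V → Prop
  | base {l r : Tm F ar X} {σ : X → Tm F ar V} :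
      (l, r) ∈ R → RStep R (l.subst σ) (r.subst σ)
  | congr {f : F} {ts : Fin (ar f) → Tm F ar V} {i : Fin (ar f)} {t' : Tm F ar V} :
      RStep R (ts i) t' → RStep R (.node f ts) (.node f (Function.update ts i t'))

/-- `t` is an `R`-normal form. -/
def IsNF {F : Type} {ar : F → ℕ} {X V : Type} (R : TRS F ar X) (t : Tm F ar V) : Prop :=
  ∀ t', ¬ RStep R t t'

/-!
If a ground term `g` is accepted in state `q` and `g →_R g₁`, then `g →_R⁺ g₂` for some `g₂`
also accepted in `q`. At the redex `ℓσ`, left-linearity lets the run on `ℓσ` be split into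
states `α x` for the independent subterms `σ x`; weak closure replaces `ℓα ⇝* q` by `tα ⇝* q`
with `ℓ →_R⁺ t`, and reachability provides ground instances for the variables of `t` not in
`ℓ`. As `L(A)` has no normal forms, iterating this from an accepted term never stops.
-/

open Relation

theorem Relation.exists_chain_of_forall_exists_transGen {α : Type*} {r : α → α → Prop}
    {S : Set α} (h : ∀ a ∈ S, ∃ b ∈ S, TransGen r a b) {a : α} (ha : a ∈ S) :
    ∃ f : ℕ → α, f 0 = a ∧ ∀ n, r (f n) (f (n + 1)) := by
  have hnacc : ¬ Acc (TransGen (flip r)) a := by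
    intro hacc
    induction hacc with
    | intro x _ ih =>
      obtain ⟨b, hb, hxb⟩ := h x ha
      exact ih b (transGen_swap.mpr hxb) hb
  exact not_acc_iff_exists_descending_chain.mp (mt acc_transGen_iff.mpr hnacc)

theorem Relation.reflTransGen_of_update {ι β : Type*} [Finite ι] [DecidableEq ι]
    {r : β → β → Prop} {p : (ι → β) → (ι → β) → Prop}
    (hp : ∀ f i b, r (f i) b → p f (Function.update f i b)) {f g : ι → β}
    (h : ∀ i, ReflTransGen r (f i) (g i)) : ReflTransGen p f g := by
  have hone : ∀ (f : ι → β) (i : ι) {b : β}, ReflTransGen r (f i) b →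
      ReflTransGen p f (Function.update f i b) := by
    intro f i b hb
    induction hb with
    | refl => rw [Function.update_eq_self]
    | tail _ hbc ih =>
      refine ih.tail ?_
      simpa using hp (Function.update f i _) i _ (by simpa using hbc)
  have := Fintype.ofFinite ι
  suffices ∀ s : Finset ι, ReflTransGen p f (fun i => if i ∈ s then g i else f i) by
    simpa using this Finset.univ
  intro s
  induction s using Finset.induction_on with
  | empty => simpa using ReflTransGen.refl
  | insert a s ha ih =>
    convert ih.trans (hone _ a (b := g a) (by simpa [ha] using h a)) using 1
    ext i
    rcases eq_or_ne i a with rfl | hi <;> simp [*]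

namespace Tm

variable {F : Type} {ar : F → ℕ} {V W : Type}

theorem subst_subst {U : Type} (σ : V → Tm F ar W) (τ : W → Tm F ar U) (t : Tm F ar V) :
    (t.subst σ).subst τ = t.subst (fun x => (σ x).subst τ) := by
  induction t with
  | var x => rfl
  | node f ts ih => exact congrArg (node f) (funext ih)

theorem mem_varsList_node {f : F} {ts : Fin (ar f) → Tm F ar V} {x : V} :
    x ∈ (node f ts).varsList ↔ ∃ i, x ∈ (ts i).varsList := by
  simp [varsList]

theorem subst_congr {σ τ : V → Tm F ar W} {t : Tm F ar V}
    (h : ∀ x ∈ t.varsList, σ x = τ x) : t.subst σ = t.subst τ := by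
  induction t with
  | var x => exact h x (List.mem_singleton_self x)
  | node f ts ih =>
    exact congrArg (node f) <| funext fun i =>
      ih i fun x hx => h x (mem_varsList_node.mpr ⟨i, hx⟩)

theorem Linear.of_node {f : F} {ts : Fin (ar f) → Tm F ar V} (h : (node f ts).Linear)
    (i : Fin (ar f)) : (ts i).Linear :=
  (List.nodup_flatten.mp h).1 _ (List.mem_ofFn.mpr ⟨i, rfl⟩)

theorem Linear.disjoint_of_node {f : F} {ts : Fin (ar f) → Tm F ar V} (h : (node f ts).Linear)
    {i j : Fin (ar f)} (hij : i ≠ j) : (ts i).varsList.Disjoint (ts j).varsList := by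
  have hpw := List.pairwise_ofFn.mp (List.nodup_flatten.mp h).2
  rcases hij.lt_or_gt with hlt | hgt
  · exact hpw hlt
  · exact (hpw hgt).symm

end Tm

theorem GTm.toTm_subst {F : Type} {ar : F → ℕ} {X V : Type} (l : Tm F ar X)
    (σ : X → GTm F ar) : (GTm.toTm (l.subst σ) : Tm F ar V) = l.subst (fun x => (σ x).toTm) :=
  Tm.subst_subst _ _ _

namespace RStep

variable {F : Type} {ar : F → ℕ} {X V : Type} {R : TRS F ar X}

theorem subst {W : Type} (σ : V → Tm F ar W) {s t : Tm F ar V} (h : RStep R s t) :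
    RStep R (s.subst σ) (t.subst σ) := by
  induction h with
  | base hmem => rw [Tm.subst_subst, Tm.subst_subst]; exact base hmem
  | @congr f ts i t' _ ih =>
    have hupd : (fun j => (Function.update ts i t' j).subst σ) =
        Function.update (fun j => (ts j).subst σ) i (t'.subst σ) := by
      ext j; rcases eq_or_ne j i with rfl | hj <;> simp [*]
    change RStep R (.node f _) (.node f fun j => (Function.update ts i t' j).subst σ)
    rw [hupd]
    exact congr ih

theorem transGen_node_update {f : F} (ts : Fin (ar f) → Tm F ar V) (i : Fin (ar f))
    {s t : Tm F ar V} (h : TransGen (RStep R) s t) :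
    TransGen (RStep R) (.node f (Function.update ts i s)) (.node f (Function.update ts i t)) :=
  h.lift (p := RStep R) (fun u => Tm.node f (Function.update ts i u)) fun u v huv => by
    simpa using congr (ts := Function.update ts i u) (i := i) (by simpa using huv)

end RStep

namespace Automaton

variable {F : Type} {ar : F → ℕ} {Q X : Type} {A : Automaton F ar Q}

theorem Steps.eq_of_var {q : Q} {t : Tm F ar Q} (h : A.Steps (.var q) t) : t = .var q := by
  induction h with
  | refl => rfl
  | tail _ hstep ih => subst ih; cases hstep

theorem Steps.node {f : F} {ts ts' : Fin (ar f) → Tm F ar Q}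
    (h : ∀ i, A.Steps (ts i) (ts' i)) : A.Steps (.node f ts) (.node f ts') := by
  classical
  exact (reflTransGen_of_update (p := fun us vs => A.Step (.node f us) (.node f vs))
    (fun _ _ _ hstep => Step.congr hstep) h).lift _ fun _ _ => id

theorem steps_node_var_iff {f : F} {ts : Fin (ar f) → Tm F ar Q} {q : Q} :
    A.Steps (.node f ts) (.var q) ↔
      ∃ qs : Fin (ar f) → Q, A.delta f qs q ∧ ∀ i, A.Steps (ts i) (.var (qs i)) := by
  refine ⟨fun h => ?_, fun ⟨qs, hδ, hts⟩ => (Steps.node hts).tail (Step.base hδ)⟩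
  generalize hs : Tm.node f ts = s at h
  induction h using Relation.ReflTransGen.head_induction_on generalizing ts with
  | refl => cases hs
  | head hstep hrest ih =>
    subst hs
    cases hstep with
    | base hδ =>
      cases Steps.eq_of_var hrest
      exact ⟨_, hδ, fun _ => .refl⟩
    | @congr _ _ i _ hstep =>
      obtain ⟨qs, hδ, hts⟩ := ih rfl
      refine ⟨qs, hδ, fun j => ?_⟩
      rcases eq_or_ne j i with rfl | hj
      · exact .head hstep (by simpa using hts j : A.Steps _ _)
      · simpa [hj] using hts j

theorem Steps.subst {V : Type} {σ τ : V → Tm F ar Q} (h : ∀ x, A.Steps (σ x) (τ x))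
    (t : Tm F ar V) : A.Steps (t.subst σ) (t.subst τ) := by
  induction t with
  | var x => exact h x
  | node f ts ih => exact Steps.node ih


theorem exists_states_of_steps_subst {l : Tm F ar X} (hl : l.Linear) {σ : X → Tm F ar Q}
    {q : Q} (h : A.Steps (l.subst σ) (.var q)) :
    ∃ α : X → Q, A.Steps (l.subst fun x => .var (α x)) (.var q) ∧
      ∀ x ∈ l.varsList, A.Steps (σ x) (.var (α x)) := by
  induction l generalizing q with
  | var x =>
    refine ⟨fun _ => q, .refl, fun y hy => ?_⟩
    obtain rfl := List.mem_singleton.mp hy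
    exact h
  | node f ts ih =>
    obtain ⟨qs, hδ, hts⟩ := steps_node_var_iff.mp h
    choose αs hαs hσ using fun i => ih i (hl.of_node i) (hts i)
    classical
    -- by linearity the `αs i` live on disjoint sets of variables, so they glue
    let α : X → Q := fun x => if hx : ∃ i, x ∈ (ts i).varsList then αs hx.choose x else q
    have hα : ∀ i, ∀ x ∈ (ts i).varsList, α x = αs i x := by
      intro i x hx
      have hex : ∃ j, x ∈ (ts j).varsList := ⟨i, hx⟩
      obtain rfl : hex.choose = i :=
        by_contra fun hne => hl.disjoint_of_node hne hex.choose_spec hx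
      simp only [α, dif_pos hex]
    refine ⟨α, steps_node_var_iff.mpr ⟨qs, hδ, fun i => ?_⟩, fun x hx => ?_⟩
    · rw [Tm.subst_congr fun x hx => congrArg Tm.var (hα i x hx)]
      exact hαs i
    · obtain ⟨i, hx⟩ := Tm.mem_varsList_node.mp hx
      rw [hα i x hx]
      exact hσ i x hx

def WeaklyClosed (A : Automaton F ar Q) (R : TRS F ar X) : Prop :=
  ∀ p ∈ R, ∀ (α : X → Q) (q : Q),
    A.Steps (p.1.subst (fun x => .var (α x))) (.var q) →
    ∃ t : Tm F ar X, TransGen (RStep R) p.1 t ∧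
      A.Steps (t.subst (fun x => .var (α x))) (.var q)

theorem exists_transGen_of_rStep {R : TRS F ar X} (hll : LeftLinear R)
    (hwc : A.WeaklyClosed R) (hreach : ∀ q, A.Reachable q) {g g₁ : GTm F ar}
    (hg : RStep R g g₁) {q : Q} (hq : A.Steps g.toTm (.var q)) :
    ∃ g₂ : GTm F ar, TransGen (RStep R) g g₂ ∧ A.Steps g₂.toTm (.var q) := by
  induction hg generalizing q with
  | @base l r σ hmem =>
    rw [GTm.toTm_subst] at hq
    obtain ⟨α, hlα, hσα⟩ := exists_states_of_steps_subst (hll _ hmem) hq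
    obtain ⟨t, hlt, htα⟩ := hwc _ hmem α q hlα
    classical
    let τ : X → GTm F ar := fun x => if x ∈ l.varsList then σ x else (hreach (α x)).choose
    have hτα : ∀ x, A.Steps (τ x).toTm (.var (α x)) := by
      intro x
      by_cases hx : x ∈ l.varsList
      · simpa [τ, hx] using hσα x hx
      · simpa [τ, hx] using (hreach (α x)).choose_spec
    refine ⟨t.subst τ, ?_, ?_⟩
    · rw [show l.subst σ = l.subst τ from Tm.subst_congr fun x hx => by simp [τ, hx]]
      exact hlt.lift (Tm.subst τ) fun _ _ => RStep.subst τ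
    · rw [GTm.toTm_subst]
      exact (Steps.subst hτα t).trans htα
  | @congr f ts i g₁ _ ih =>
    obtain ⟨qs, hδ, hts⟩ := steps_node_var_iff.mp hq
    obtain ⟨g₂, hg₁g₂, hg₂⟩ := ih (hts i)
    refine ⟨.node f (Function.update ts i g₂),
      by simpa using RStep.transGen_node_update ts i hg₁g₂,
      steps_node_var_iff.mpr ⟨qs, hδ, fun j => ?_⟩⟩
    rcases eq_or_ne j i with rfl | hj
    · simpa [GTm.toTm] using hg₂
    · simpa [hj] using hts j

end Automaton

theorem accept_and_nontermination_general {F : Type} {ar : F → ℕ} {Q X : Type}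
    (A : Automaton F ar Q) (R : TRS F ar X)
    (hreach : ∀ q : Q, A.Reachable q)
    (hfin : A.final.Nonempty) :
    (∃ (t : GTm F ar) (q : Q), q ∈ A.final ∧ A.Steps t.toTm (.var q)) ∧
    (LeftLinear R →
      (∀ p ∈ R, ∀ (α : X → Q) (q : Q),
        A.Steps (p.1.subst (fun x => .var (α x))) (.var q) →
        ∃ t : Tm F ar X, Relation.TransGen (RStep R) p.1 t ∧
          A.Steps (t.subst (fun x => .var (α x))) (.var q)) →
      (∀ t ∈ A.Lang, ¬ IsNF R t) →
      A.Lang.Infinite ∨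
        ∃ t ∈ A.Lang, ∃ seq : ℕ → GTm F ar, seq 0 = t ∧
          ∀ n : ℕ, RStep R (seq n) (seq (n + 1))) := by
  obtain ⟨q₀, hq₀⟩ := hfin
  obtain ⟨t₀, ht₀⟩ := hreach q₀
  refine ⟨⟨t₀, q₀, hq₀, ht₀⟩, fun hll hwc hnf => .inr ⟨t₀, ⟨q₀, hq₀, ht₀⟩, ?_⟩⟩
  refine exists_chain_of_forall_exists_transGen (S := A.Lang)
    (fun g ⟨q, hq, hg⟩ => ?_) ⟨q₀, hq₀, ht₀⟩
  obtain ⟨g₁, hg₁⟩ : ∃ g₁, RStep R g g₁ := by simpa [IsNF] using hnf g ⟨q, hq, hg⟩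
  obtain ⟨g₂, hgg₂, hg₂⟩ := Automaton.exists_transGen_of_rStep hll hwc hreach hg₁ hg
  exact ⟨g₂, ⟨q, hq, hg₂⟩, hgg₂⟩

/-- If all states are reachable, there is a final state, and the signature has a constant,
then some ground term is accepted; and if moreover the weak-closure criterion holds for a
left-linear TRS `R` and `L(A)` contains no `R`-normal forms, then `L(A)` is infinite or
some term of `L(A)` starts an infinite `R`-reduction. -/
theorem accept_and_nontermination {F : Type} {ar : F → ℕ} {Q X : Type}
    (A : Automaton F ar Q) (R : TRS F ar X)
    (hreach : ∀ q : Q, A.Reachable q)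
    (hfin : A.final.Nonempty)
    (hconst : ∃ c : F, ar c = 0) :
    (∃ (t : GTm F ar) (q : Q), q ∈ A.final ∧ A.Steps t.toTm (.var q)) ∧
    (LeftLinear R →
      (∀ p ∈ R, ∀ (α : X → Q) (q : Q),
        A.Steps (p.1.subst (fun x => .var (α x))) (.var q) →
        ∃ t : Tm F ar X, Relation.TransGen (RStep R) p.1 t ∧
          A.Steps (t.subst (fun x => .var (α x))) (.var q)) →
      (∀ t ∈ A.Lang, ¬ IsNF R t) →
      A.Lang.Infinite ∨
        ∃ t ∈ A.Lang, ∃ seq : ℕ → GTm F ar, seq 0 = t ∧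
          ∀ n : ℕ, RStep R (seq n) (seq (n + 1))) :=
  accept_and_nontermination_general A R hreach hfin
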